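/- Let n ≥ 1. For each f : Fin n → Bool, let R_f be the matrix indexed by functions Fin n → Fin d × Fin d with entries R_f[x,y] = ∏_{t} (if f t then Φ else (I − Φ))[x t, y t]. Suppose p : (Fin n → Bool) → ℝ satisfies p f ≥ 0 for all f and p(fun _ => false) = 0 (i.e., the all-(I−Φ) term is excluded), and let N = Σ_f p f • R_f. If the partial transpose N^Γ is positive semidefinite, then p f = 0 for all f (hence N = 0). -/

import Mathlib

open Matrix Kronecker ComplexOrder

/-!
On one pair of systems `d • (Phi d)^Γ` is the swap operator, so `e_{ij} ± e_{ji}` (`i ≠ j`) are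
eigenvectors of `(Phi d)^Γ` and `(1 - Phi d)^Γ`, with eigenvalues `±1/d` and `1 ∓ 1/d`. Hence on the
product vectors `v_c` built from a sign pattern `c`, the quadratic form of `N^Γ` is
`q c = ∑ f, p f * ∏ t, w (f t) (c t)`, where `w` is twice the eigenvalue (`‖e_{ij} ± e_{ji}‖² = 2`);
it is `≥ 0` by positivity of `N^Γ`. Summing over all sign patterns annihilates every `f` with a `Phi` factor (the two eigenvalues `±1/d` cancel), so
`∑ c, q c = 4 ^ n * p (fun _ => false) = 0` and every `q c` vanishes. For the all-symmetric pattern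
all weights `w` are strictly positive, which forces `p = 0`.
-/

/-- Projector onto the maximally entangled state: Φ[(i,j),(k,l)] = 1/d if i=j and k=l. -/
noncomputable def Phi (d : ℕ) : Matrix (Fin d × Fin d) (Fin d × Fin d) ℂ :=
  fun p q => if p.1 = p.2 ∧ q.1 = q.2 then ((d : ℂ))⁻¹ else 0

/-- Sitewise partial transpose on n pairs of systems:
M^Γ[(p,q),(r,s)] = M[(p,s),(r,q)], identifying x : Fin n → Fin d × Fin d with (x₁, x₂). -/
def ptransN (d n : ℕ) (M : Matrix (Fin n → Fin d × Fin d) (Fin n → Fin d × Fin d) ℂ) :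
    Matrix (Fin n → Fin d × Fin d) (Fin n → Fin d × Fin d) ℂ :=
  fun x y => M (fun t => ((x t).1, (y t).2)) (fun t => ((y t).1, (x t).2))

/-- The tensor product R_f with factor Φ at sites where f is true and I − Φ elsewhere. -/
noncomputable def Rten (d n : ℕ) (f : Fin n → Bool) :
    Matrix (Fin n → Fin d × Fin d) (Fin n → Fin d × Fin d) ℂ :=
  fun x y => ∏ t : Fin n,
    (if f t then Phi d else (1 : Matrix (Fin d × Fin d) (Fin d × Fin d) ℂ) - Phi d) (x t) (y t)

lemma star_dotProduct_mulVec_pi_prod {ι α R : Type*} [Fintype ι] [DecidableEq ι] [Fintype α]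
    [CommSemiring R] [StarRing R] (A : ι → Matrix α α R) (u : ι → α → R) :
    star (fun x : ι → α => ∏ i, u i (x i)) ⬝ᵥ
        ((fun x y : ι → α => ∏ i, A i (x i) (y i) : Matrix (ι → α) (ι → α) R) *ᵥ
          fun x => ∏ i, u i (x i)) =
      ∏ i, star (u i) ⬝ᵥ (A i *ᵥ u i) := by
  simp only [dotProduct, mulVec, Pi.star_apply, star_prod, Finset.mul_sum, Fintype.prod_sum,
    ← Finset.prod_mul_distrib]

lemma star_dotProduct_mulVec_single_add_smul_single {m R : Type*} [Fintype m] [DecidableEq m]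
    [CommRing R] [StarRing R] (B : Matrix m m R) (a a' : m) (s : R) :
    star (Pi.single a 1 + s • Pi.single a' 1) ⬝ᵥ (B *ᵥ (Pi.single a 1 + s • Pi.single a' 1)) =
      B a a + s * B a a' + star s * B a' a + star s * s * B a' a' := by
  simp only [star_add, Pi.star_single, star_one, star_smul, mulVec_add, mulVec_smul,
    mulVec_single_one, dotProduct_add, add_dotProduct, single_one_dotProduct, col_apply,
    smul_dotProduct, dotProduct_smul, smul_eq_mul]
  ring

def partialTranspose {α β R : Type*} (A : Matrix (α × β) (α × β) R) :
    Matrix (α × β) (α × β) R :=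
  fun a b => A (a.1, b.2) (b.1, a.2)

lemma ptransN_Rten (d n : ℕ) (f : Fin n → Bool) :
    ptransN d n (Rten d n f) = fun x y =>
      ∏ t, partialTranspose (if f t then Phi d else 1 - Phi d) (x t) (y t) :=
  rfl

lemma ptransN_sum_smul {ι : Type*} (d n : ℕ) (s : Finset ι) (c : ι → ℝ)
    (M : ι → Matrix (Fin n → Fin d × Fin d) (Fin n → Fin d × Fin d) ℂ) :
    ptransN d n (∑ i ∈ s, c i • M i) = ∑ i ∈ s, c i • ptransN d n (M i) := by
  ext x y
  simp [ptransN, Matrix.sum_apply]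

section Site

variable {d : ℕ} {i j : Fin d}

noncomputable def swapVec (i j : Fin d) (s : ℝ) : Fin d × Fin d → ℂ :=
  Pi.single (i, j) 1 + (s : ℂ) • Pi.single (j, i) 1

lemma star_dotProduct_partialTranspose_Phi (hij : i ≠ j) (s : ℝ) :
    star (swapVec i j s) ⬝ᵥ (partialTranspose (Phi d) *ᵥ swapVec i j s) = 2 * s / d := by
  rw [swapVec, star_dotProduct_mulVec_single_add_smul_single]
  simp only [partialTranspose, Phi, hij, hij.symm, and_self, if_true, if_false, zero_add, add_zero,
    mul_zero, RCLike.star_def, Complex.conj_ofReal]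
  ring

lemma star_dotProduct_partialTranspose_one_sub_Phi (hij : i ≠ j) (s : ℝ) :
    star (swapVec i j s) ⬝ᵥ (partialTranspose (1 - Phi d) *ᵥ swapVec i j s) =
      1 + s ^ 2 - 2 * s / d := by
  rw [swapVec, star_dotProduct_mulVec_single_add_smul_single]
  simp only [partialTranspose, Phi, Matrix.sub_apply, one_apply_eq, one_apply_ne, ne_eq,
    Prod.mk.injEq, hij, hij.symm, and_self, not_false_eq_true, if_true, if_false, sub_zero, zero_sub,
    mul_neg, mul_one, RCLike.star_def, Complex.conj_ofReal]
  ring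

end Site

def boolSign (b : Bool) : ℝ := if b then -1 else 1

noncomputable def siteWeight (d : ℕ) (isPhi b : Bool) : ℝ :=
  if isPhi then 2 * boolSign b / d else 2 - 2 * boolSign b / d

lemma star_dotProduct_partialTranspose_swapVec {d : ℕ} {i j : Fin d} (hij : i ≠ j)
    (isPhi b : Bool) :
    star (swapVec i j (boolSign b)) ⬝ᵥ
        (partialTranspose (if isPhi then Phi d else 1 - Phi d) *ᵥ swapVec i j (boolSign b)) =
      siteWeight d isPhi b := by
  have hsign : (boolSign b : ℂ) ^ 2 = 1 := by cases b <;> norm_num [boolSign]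
  cases isPhi
  · simp only [Bool.false_eq_true, if_false, siteWeight,
      star_dotProduct_partialTranspose_one_sub_Phi hij]
    push_cast
    linear_combination hsign
  · simp only [if_true, siteWeight, star_dotProduct_partialTranspose_Phi hij]
    push_cast
    ring

lemma sum_siteWeight_true (d : ℕ) : ∑ b, siteWeight d true b = 0 := by
  simp only [Fintype.sum_bool, siteWeight, boolSign, if_true, Bool.false_eq_true, if_false]
  ring

lemma siteWeight_false_pos {d : ℕ} (hd : 1 < d) (isPhi : Bool) :
    0 < siteWeight d isPhi false := by
  have hd' : (1 : ℝ) < d := by exact_mod_cast hd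
  cases isPhi
  · simpa [siteWeight, boolSign] using div_lt_self two_pos hd'
  · have : (0 : ℝ) < 2 / d := by positivity
    simpa [siteWeight, boolSign] using this

lemma sum_prod_siteWeight_eq_zero {d n : ℕ} {f : Fin n → Bool} (hf : f ≠ fun _ => false) :
    ∑ c : Fin n → Bool, ∏ t, siteWeight d (f t) (c t) = 0 := by
  obtain ⟨t, ht⟩ := Function.ne_iff.mp hf
  rw [← Fintype.prod_sum]
  exact Finset.prod_eq_zero (Finset.mem_univ t) (by simpa [ht] using sum_siteWeight_true d)

noncomputable def testVec {d n : ℕ} (i j : Fin d) (c : Fin n → Bool) :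
    (Fin n → Fin d × Fin d) → ℂ :=
  fun x => ∏ t, swapVec i j (boolSign (c t)) (x t)

lemma star_dotProduct_ptransN_Rten_testVec {d n : ℕ} {i j : Fin d} (hij : i ≠ j)
    (f c : Fin n → Bool) :
    star (testVec i j c) ⬝ᵥ (ptransN d n (Rten d n f) *ᵥ testVec i j c) =
      ∏ t, (siteWeight d (f t) (c t) : ℂ) := by
  rw [ptransN_Rten]
  unfold testVec
  rw [star_dotProduct_mulVec_pi_prod]
  exact Finset.prod_congr rfl fun t _ => star_dotProduct_partialTranspose_swapVec hij (f t) (c t)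

lemma star_dotProduct_ptransN_sum_testVec {d n : ℕ} {i j : Fin d} (hij : i ≠ j)
    (p : (Fin n → Bool) → ℝ) (c : Fin n → Bool) :
    star (testVec i j c) ⬝ᵥ (ptransN d n (∑ f, p f • Rten d n f) *ᵥ testVec i j c) =
      ((∑ f, p f * ∏ t, siteWeight d (f t) (c t) : ℝ) : ℂ) := by
  simp only [ptransN_sum_smul, sum_mulVec, dotProduct_sum, smul_mulVec, dotProduct_smul,
    star_dotProduct_ptransN_Rten_testVec hij]
  push_cast
  rfl

lemma eq_zero_of_sum_mul_nonneg {ι κ : Type*} [Fintype ι] [Fintype κ]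
    {p : ι → ℝ} {W : ι → κ → ℝ} {f₀ : ι} {c₀ : κ}
    (hp : ∀ f, 0 ≤ p f) (hp₀ : p f₀ = 0) (hW : ∀ f ≠ f₀, ∑ c, W f c = 0)
    (hpos : ∀ f, 0 < W f c₀) (hq : ∀ c, 0 ≤ ∑ f, p f * W f c) (f : ι) : p f = 0 := by
  have hsum : ∑ c, ∑ f, p f * W f c = 0 := by
    rw [Finset.sum_comm]
    refine Finset.sum_eq_zero fun f _ => ?_
    rw [← Finset.mul_sum]
    by_cases hf : f = f₀
    · rw [hf, hp₀, zero_mul]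
    · rw [hW f hf, mul_zero]
  have hq₀ : ∑ f, p f * W f c₀ = 0 :=
    (Finset.sum_eq_zero_iff_of_nonneg fun c _ => hq c).1 hsum c₀ (Finset.mem_univ _)
  have hf : p f * W f c₀ = 0 :=
    (Finset.sum_eq_zero_iff_of_nonneg fun f _ => mul_nonneg (hp f) (hpos f).le).1 hq₀ f
      (Finset.mem_univ _)
  exact (mul_eq_zero.1 hf).resolve_right (hpos f).ne'

theorem stmt_4 (d n : ℕ) (hd : 2 ≤ d)
    (p : (Fin n → Bool) → ℝ) (hp : ∀ f, 0 ≤ p f) (hp0 : p (fun _ => false) = 0)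
    (N : Matrix (Fin n → Fin d × Fin d) (Fin n → Fin d × Fin d) ℂ)
    (hN : N = ∑ f : Fin n → Bool, p f • Rten d n f)
    (hpt : (ptransN d n N).PosSemidef) :
    (∀ f : Fin n → Bool, p f = 0) ∧ N = 0 := by
  obtain ⟨i, j, hij⟩ := (Fin.nontrivial_iff_two_le.2 hd).exists_pair_ne
  have hp_zero : ∀ f, p f = 0 := by
    refine eq_zero_of_sum_mul_nonneg hp hp0 (fun f hf => sum_prod_siteWeight_eq_zero hf)
      (fun f => Finset.prod_pos fun t _ => siteWeight_false_pos hd (f t)) fun c => ?_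
    have h := hpt.dotProduct_mulVec_nonneg (testVec i j c)
    rwa [hN, star_dotProduct_ptransN_sum_testVec hij, Complex.zero_le_real] at h
  exact ⟨hp_zero, by simp [hN, hp_zero]⟩
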